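/- Let R be an Erdős sieve over an étale ℚ-algebra K with weak light tails for a Følner sequence (I_N). Suppose that for every finite set A ⊆ ℕ and every choice of elements x_i ∈ O_K for i ∈ A, the sieve R' defined by R'_i := x_i + R_i for i ∈ A and R'_i := R_i for i ∉ A also has weak light tails for (I_N). Then R has strong light tails for (I_N). -/

import Mathlib

open Filter Topology MeasureTheory Pointwise symmDiff

noncomputable section

namespace ErdosSieve

variable {O : Type} [CommRing O]

/-- A sieve over (the ring of integers of) an étale `ℚ`-algebra: a sequence of pairwise
coprime invertible (i.e. finite-quotient) ideals `b i` together with, for each `i`, a finite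
set `gen i` of representatives, so that the sieved-out set is `R_i = gen i + b i`, which is
required to be a proper subset of the ring. -/
structure Sieve (O : Type) [CommRing O] : Type where
  b : ℕ → Ideal O
  gen : ℕ → Finset O
  coprime : ∀ i j, i ≠ j → b i ⊔ b j = ⊤
  finQuot : ∀ i, Finite (O ⧸ b i)
  ne_univ : ∀ i, (↑(gen i) : Set O) + (↑(b i) : Set O) ≠ Set.univ

/-- The `i`-th sieved-out set `R_i = gen i + b i`. -/
def Sieve.RSet (S : Sieve O) (i : ℕ) : Set O := (↑(S.gen i) : Set O) + (↑(S.b i) : Set O)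

/-- The set `F_R` of `R`-free numbers. -/
def Sieve.FR (S : Sieve O) : Set O := (⋃ i, S.RSet i)ᶜ

/-- The norm `N(b i)` of the `i`-th ideal. -/
def Sieve.normb (S : Sieve O) (i : ℕ) : ℕ := Nat.card (O ⧸ S.b i)

/-- The number `|R_i|` of residue classes modulo `b i` met by `R_i`. -/
def Sieve.cardR (S : Sieve O) (i : ℕ) : ℕ :=
  Nat.card ((Ideal.Quotient.mk (S.b i)) '' (S.RSet i))

/-- A sieve is Erdős if `∑ |R_i| / N(b_i) < ∞`. -/
def Sieve.IsErdos (S : Sieve O) : Prop :=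
  Summable fun i => (S.cardR i : ℝ) / (S.normb i : ℝ)

/-- A Følner sequence: finite nonempty subsets of `O` which are asymptotically
translation-invariant. -/
def IsFolner (I : ℕ → Set O) : Prop :=
  (∀ N, (I N).Finite) ∧ (∀ N, (I N).Nonempty) ∧
    ∀ x : O, Tendsto
      (fun N => (Nat.card ↥(((x + ·) '' I N) ∆ (I N)) : ℝ) / (Nat.card ↥(I N) : ℝ))
      atTop (𝓝 0)

/-- Upper density along a (Følner) sequence. -/
def upperDensity (I : ℕ → Set O) (A : Set O) : ℝ :=
  limsup (fun N => (Nat.card ↥(A ∩ I N) : ℝ) / (Nat.card ↥(I N) : ℝ)) atTop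

/-- `A` has density `d` along the sequence `I`. -/
def HasDensity (I : ℕ → Set O) (A : Set O) (d : ℝ) : Prop :=
  Tendsto (fun N => (Nat.card ↥(A ∩ I N) : ℝ) / (Nat.card ↥(I N) : ℝ)) atTop (𝓝 d)

/-- `⋃_{i ≥ L} R i`. -/
def unionGe (R : ℕ → Set O) (L : ℕ) : Set O := ⋃ i, ⋃ (_ : L ≤ i), R i

/-- `⋃_{i < L} R i`. -/
def unionLt (R : ℕ → Set O) (L : ℕ) : Set O := ⋃ i, ⋃ (_ : i < L), R i

/-- The weak light tails property for a family of sieved-out sets: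
`limsup`-density of `⋃_{i ≥ L} R_i ∖ ⋃_{j < L} R_j` tends to `0` as `L → ∞`. -/
def WeakLightTailsFam (I : ℕ → Set O) (R : ℕ → Set O) : Prop :=
  Tendsto (fun L => upperDensity I (unionGe R L \ unionLt R L)) atTop (𝓝 0)

/-- The strong light tails property for a family of sieved-out sets. -/
def StrongLightTailsFam (I : ℕ → Set O) (R : ℕ → Set O) : Prop :=
  Tendsto (fun L => upperDensity I (unionGe R L)) atTop (𝓝 0)

/-- A sieve has weak light tails for `I` if it is Erdős and the tail differences have
vanishing upper density. -/
def Sieve.HasWeakLightTails (S : Sieve O) (I : ℕ → Set O) : Prop :=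
  S.IsErdos ∧ WeakLightTailsFam I S.RSet

/-- A sieve has strong light tails for `I` if it is Erdős and the tails have vanishing
upper density. -/
def Sieve.HasStrongLightTails (S : Sieve O) (I : ℕ → Set O) : Prop :=
  S.IsErdos ∧ StrongLightTailsFam I S.RSet

/-- The infinite product `∏_i (1 - |R_i|/N(b_i))`, realized as the infimum of the
(nonincreasing) sequence of partial products, i.e. as its limit. -/
def Sieve.prodDensity (S : Sieve O) : ℝ :=
  ⨅ L : ℕ, ∏ i ∈ Finset.range L, (1 - (S.cardR i : ℝ) / (S.normb i : ℝ))

/-- `A` is an `R`-admissible set: `-A + R_i ≠ O` for all `i`. -/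
def Sieve.Admissible (S : Sieve O) (A : Set O) : Prop :=
  ∀ i, -A + S.RSet i ≠ Set.univ

/-- The number `|-A + R_i|` of residue classes modulo `b i` met by `-A + R_i`. -/
def Sieve.cardShift (S : Sieve O) (A : Set O) (i : ℕ) : ℕ :=
  Nat.card ((Ideal.Quotient.mk (S.b i)) '' (-A + S.RSet i))

/-- The infinite product `∏_i (1 - |-A + R_i|/N(b_i))` (as the infimum of the
partial products). -/
def Sieve.prodDensityShift (S : Sieve O) (A : Set O) : ℝ :=
  ⨅ L : ℕ, ∏ i ∈ Finset.range L, (1 - (S.cardShift A i : ℝ) / (S.normb i : ℝ))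

/-- A subset `Y` of `O` is syndetic if finitely many translates of it cover `O`. -/
def Syndetic (Y : Set O) : Prop := ∃ C : Finset O, Y + (↑C : Set O) = Set.univ

-- Indicator of a subset of `O`, i.e. a point of the shift space `{0,1}^O`.
open Classical in
def chiSet (A : Set O) : O → Bool := fun x => if x ∈ A then true else false

/-- The shift action `S_a(A) = A - a` on `{0,1}^O`: `χ_{A - a}(x) = χ_A (x + a)`. -/
def shiftB (a : O) (f : O → Bool) : O → Bool := fun x => f (x + a)

/-- The odometer group `G_R = ∏ i, O ⧸ b i`. -/
abbrev Sieve.GR (S : Sieve O) : Type := ∀ i : ℕ, O ⧸ S.b i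

-- The map `φ_R : G_R → {0,1}^O`: `a ∈ φ_R(g)` iff `a + g i` avoids (the image of) `R_i`
-- modulo `b i` for every `i`.
open Classical in
def Sieve.phiB (S : Sieve O) (g : S.GR) : O → Bool := fun a =>
  if (∀ i, (Ideal.Quotient.mk (S.b i) a + g i) ∉ (Ideal.Quotient.mk (S.b i)) '' (S.RSet i))
  then true else false

/-- The Mirsky measure `ν_R` on `{0,1}^O`: the pushforward under `φ_R` of the Haar
probability measure of the compact group `G_R` (each factor being finite and discrete,
and the Haar measure being normalized so that the whole group has measure `1`). -/
def Sieve.mirsky (S : Sieve O) : Measure (O → Bool) := by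
  letI : ∀ i, TopologicalSpace (O ⧸ S.b i) := fun _ => ⊥
  haveI : ∀ i, DiscreteTopology (O ⧸ S.b i) := fun _ => ⟨rfl⟩
  haveI : ∀ i, Finite (O ⧸ S.b i) := S.finQuot
  haveI : ∀ i, IsTopologicalAddGroup (O ⧸ S.b i) := fun i => { }
  letI : MeasurableSpace S.GR := borel _
  haveI : BorelSpace S.GR := ⟨rfl⟩
  exact Measure.map S.phiB (Measure.addHaarMeasure (G := S.GR) ⊤)

/-- The ring of integers of the étale `ℚ`-algebra `K 0 × ⋯ × K (m-1)`. -/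
abbrev OK {m : ℕ} (K : Fin m → Type) [∀ j, Field (K j)] [∀ j, NumberField (K j)] : Type :=
  ∀ j, NumberField.RingOfIntegers (K j)

variable {m : ℕ} (K : Fin m → Type) [∀ j, Field (K j)] [∀ j, NumberField (K j)]

/-- The "ball" `B_N` in `O_K`: elements all of whose archimedean embeddings have absolute
value at most `N` (the max over embeddings of all the number-field components). -/
def ball (N : ℕ) : Set (OK K) :=
  {x | ∀ j, ∀ φ : K j →+* ℂ,
    ‖φ (algebraMap (NumberField.RingOfIntegers (K j)) (K j) (x j))‖ ≤ N}

/-!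
A Følner sequence equidistributes among the residue classes modulo an ideal of finite index, so
`d̄(R_j) ≤ |R_j| / N(b_j)`, and by the Erdős condition the sets `R_j` with `M ≤ j < L` have small
total upper density once `M` is large. Any other point of `⋃_{i ≥ L} R_i` can be moved out of
`⋃_{j < M} R_j` by translating `R_0, …, R_{M-1}`; as `R_j` is a union of cosets of `b_j`, finitely
many translation vectors suffice. The point then lies in `⋃_{i ≥ L} R'_i ∖ ⋃_{j < L} R'_j` for one
of finitely many translated sieves `R'`, whose weak light tails make this set small for large `L`.
-/

theorem ncard_inter_le_ncard_image_add_inter_add {G : Type*} [AddGroup G] {T : Set G}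
    (hT : T.Finite) (A : Set G) (x : G) :
    (A ∩ T).ncard ≤ ((x + ·) '' A ∩ T).ncard + (((x + ·) '' T) ∆ T).ncard := by
  have hsub : (x + ·) '' (A ∩ T) ⊆ (x + ·) '' A ∩ T ∪ ((x + ·) '' T) ∆ T := by
    rintro _ ⟨a, ⟨haA, haT⟩, rfl⟩
    by_cases h : x + a ∈ T
    · exact Set.mem_union_left _ ⟨⟨a, haA, rfl⟩, h⟩
    · exact Or.inr (Set.mem_symmDiff.2 (Or.inl ⟨⟨a, haT, rfl⟩, h⟩))
  calc (A ∩ T).ncard = ((x + ·) '' (A ∩ T)).ncard :=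
        (Set.ncard_image_of_injective _ (add_right_injective x)).symm
    _ ≤ ((x + ·) '' A ∩ T ∪ ((x + ·) '' T) ∆ T).ncard :=
        Set.ncard_le_ncard hsub ((hT.inter_of_right _).union ((hT.image (x + ·)).symmDiff hT))
    _ ≤ _ := Set.ncard_union_le _ _

section Fibers

variable {G Q : Type*} [AddCommGroup G] [AddCommGroup Q]

theorem image_add_preimage_singleton (π : G →+ Q) (x : G) (q : Q) :
    (x + ·) '' (π ⁻¹' {q}) = π ⁻¹' {π x + q} := by
  ext z
  simp [Set.image_add_left, neg_add_eq_iff_eq_add]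

theorem sum_ncard_preimage_singleton_inter [Fintype Q] (π : G →+ Q) {T : Set G}
    (hT : T.Finite) : ∑ q, (π ⁻¹' {q} ∩ T).ncard = T.ncard := by
  classical
  rw [Set.ncard_eq_toFinset_card _ hT, Finset.card_eq_sum_card_fiberwise (f := π)
    (t := Finset.univ) fun _ _ => Finset.mem_univ _]
  refine Finset.sum_congr rfl fun q _ => ?_
  rw [← Set.ncard_coe_finset]
  congr 1
  ext
  simp [and_comm]

/-- Translating by a lift of `q' - q` moves the fibre over `q` onto the fibre over `q'` up to the
boundary `(x + T) ∆ T`; then average over `q'`. -/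
theorem card_mul_ncard_preimage_singleton_inter_le [Fintype Q] (π : G →+ Q) (s : Q → G)
    (hs : ∀ d, π (s d) = d) {T : Set G} (hT : T.Finite) (q : Q) :
    Fintype.card Q * (π ⁻¹' {q} ∩ T).ncard ≤ T.ncard + ∑ d, (((s d + ·) '' T) ∆ T).ncard := by
  calc Fintype.card Q * (π ⁻¹' {q} ∩ T).ncard = ∑ _q' : Q, (π ⁻¹' {q} ∩ T).ncard := by simp
    _ ≤ ∑ q', ((π ⁻¹' {q'} ∩ T).ncard + (((s (q' - q) + ·) '' T) ∆ T).ncard) := by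
        gcongr with q'
        have := ncard_inter_le_ncard_image_add_inter_add hT (π ⁻¹' {q}) (s (q' - q))
        rwa [image_add_preimage_singleton, hs, sub_add_cancel] at this
    _ = T.ncard + ∑ d, (((s d + ·) '' T) ∆ T).ncard := by
        rw [Finset.sum_add_distrib, sum_ncard_preimage_singleton_inter π hT]
        congr 1
        exact Equiv.sum_comp (Equiv.subRight q) fun d => (((s d + ·) '' T) ∆ T).ncard

end Fibers

section Density

variable {α : Type} {I : ℕ → Set α}

def frequency (I : ℕ → Set α) (A : Set α) (N : ℕ) : ℝ :=
  (Nat.card ↥(A ∩ I N) : ℝ) / (Nat.card ↥(I N) : ℝ)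

theorem frequency_nonneg (A : Set α) (N : ℕ) : 0 ≤ frequency I A N := by
  unfold frequency
  positivity

theorem frequency_le_one {N : ℕ} (hfin : (I N).Finite) (A : Set α) : frequency I A N ≤ 1 :=
  div_le_one_of_le₀ (by exact_mod_cast Nat.card_mono hfin Set.inter_subset_right)
    (Nat.cast_nonneg _)

theorem frequency_mono {N : ℕ} (hfin : (I N).Finite) {A B : Set α} (h : A ⊆ B) :
    frequency I A N ≤ frequency I B N := by
  unfold frequency
  gcongr
  exact Nat.card_mono (hfin.inter_of_right _) (Set.inter_subset_inter_left _ h)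

theorem frequency_union_le (A B : Set α) (N : ℕ) :
    frequency I (A ∪ B) N ≤ frequency I A N + frequency I B N := by
  unfold frequency
  rw [← add_div, Set.union_inter_distrib_right]
  gcongr
  simp only [Nat.card_coe_set_eq]
  exact_mod_cast Set.ncard_union_le _ _

theorem isBoundedUnder_ge_frequency (A : Set α) :
    IsBoundedUnder (· ≥ ·) atTop (frequency I A) :=
  isBoundedUnder_of ⟨0, frequency_nonneg A⟩

theorem isBoundedUnder_le_frequency (hfin : ∀ N, (I N).Finite) (A : Set α) :
    IsBoundedUnder (· ≤ ·) atTop (frequency I A) :=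
  isBoundedUnder_of ⟨1, fun N => frequency_le_one (hfin N) A⟩

theorem upperDensity_le_of_frequency_le {A : Set α} {g : ℕ → ℝ} {c : ℝ}
    (hle : ∀ᶠ N in atTop, frequency I A N ≤ g N) (hg : Tendsto g atTop (𝓝 c)) :
    upperDensity I A ≤ c :=
  (limsup_le_limsup hle (isBoundedUnder_ge_frequency A).isCoboundedUnder_le
    hg.isBoundedUnder_le).trans_eq hg.limsup_eq

theorem upperDensity_nonneg (hfin : ∀ N, (I N).Finite) (A : Set α) : 0 ≤ upperDensity I A :=
  le_limsup_of_frequently_le (Frequently.of_forall fun N => frequency_nonneg A N)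
    (isBoundedUnder_le_frequency hfin A)

theorem upperDensity_mono (hfin : ∀ N, (I N).Finite) {A B : Set α} (h : A ⊆ B) :
    upperDensity I A ≤ upperDensity I B :=
  limsup_le_limsup (Eventually.of_forall fun N => frequency_mono (hfin N) h)
    (isBoundedUnder_ge_frequency A).isCoboundedUnder_le (isBoundedUnder_le_frequency hfin B)

theorem upperDensity_union_le (hfin : ∀ N, (I N).Finite) (A B : Set α) :
    upperDensity I (A ∪ B) ≤ upperDensity I A + upperDensity I B :=
  (limsup_le_limsup (Eventually.of_forall fun N => frequency_union_le A B N)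
      (isBoundedUnder_ge_frequency _).isCoboundedUnder_le
      (isBoundedUnder_of ⟨2, fun N => (add_le_add (frequency_le_one (hfin N) A)
        (frequency_le_one (hfin N) B)).trans_eq one_add_one_eq_two⟩)).trans
    (limsup_add_le (isBoundedUnder_ge_frequency A) (isBoundedUnder_le_frequency hfin A)
      (isBoundedUnder_ge_frequency B).isCoboundedUnder_le (isBoundedUnder_le_frequency hfin B))

theorem upperDensity_empty_le : upperDensity I (∅ : Set α) ≤ 0 :=
  upperDensity_le_of_frequency_le (Eventually.of_forall fun N => by simp [frequency])
    tendsto_const_nhds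

theorem upperDensity_biUnion_le (hfin : ∀ N, (I N).Finite) {ι : Type*} (s : Finset ι)
    (A : ι → Set α) : upperDensity I (⋃ j ∈ s, A j) ≤ ∑ j ∈ s, upperDensity I (A j) := by
  classical
  induction s using Finset.induction with
  | empty => simpa using upperDensity_empty_le
  | insert a s ha ih =>
    rw [Finset.set_biUnion_insert, Finset.sum_insert ha]
    exact (upperDensity_union_le hfin _ _).trans (by gcongr)

end Density

section Folner

variable {I : ℕ → Set O}

theorem IsFolner.card_pos (hI : IsFolner I) (N : ℕ) : 0 < Nat.card ↥(I N) := by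
  rw [Nat.card_coe_set_eq]
  exact (hI.2.1 N).ncard_pos (hI.1 N)

theorem IsFolner.upperDensity_preimage_singleton_le {Q : Type*} [AddCommGroup Q] [Finite Q]
    (hI : IsFolner I) (π : O →+ Q) (hπ : Function.Surjective π) (q : Q) :
    upperDensity I (π ⁻¹' {q}) ≤ 1 / Nat.card Q := by
  have := Fintype.ofFinite Q
  choose s hs using hπ
  set e : ℕ → ℝ := fun N => ∑ d, (Nat.card ↥(((s d + ·) '' I N) ∆ I N) : ℝ) / Nat.card ↥(I N)
  have he : Tendsto e atTop (𝓝 0) := by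
    have := tendsto_finsetSum Finset.univ fun d _ => hI.2.2 (s d)
    rwa [Finset.sum_const_zero] at this
  have hg := (tendsto_const_nhds (x := (1 : ℝ))).add he |>.div_const (Nat.card Q : ℝ)
  rw [add_zero] at hg
  refine upperDensity_le_of_frequency_le (Eventually.of_forall fun N => ?_) hg
  have hk : (0 : ℝ) < Nat.card Q := by exact_mod_cast Nat.card_pos
  have ht : (0 : ℝ) < Nat.card ↥(I N) := by exact_mod_cast hI.card_pos N
  have hcount := card_mul_ncard_preimage_singleton_inter_le π s hs (hI.1 N) q
  simp only [← Nat.card_coe_set_eq, ← Nat.card_eq_fintype_card] at hcount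
  calc frequency I (π ⁻¹' {q}) N
      = (Nat.card Q * Nat.card ↥(π ⁻¹' {q} ∩ I N) : ℝ) / (Nat.card Q * Nat.card ↥(I N)) := by
        rw [frequency, mul_div_mul_left _ _ hk.ne']
    _ ≤ (Nat.card ↥(I N) + ∑ d, Nat.card ↥(((s d + ·) '' I N) ∆ I N) : ℝ) /
          (Nat.card Q * Nat.card ↥(I N)) := by
        gcongr
        exact_mod_cast hcount
    _ = (1 + e N) / Nat.card Q := by
        simp only [e, ← Finset.sum_div]
        field_simp
        push_cast
        ring

theorem IsFolner.upperDensity_preimage_le {Q : Type*} [AddCommGroup Q] [Finite Q]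
    (hI : IsFolner I) (π : O →+ Q) (hπ : Function.Surjective π) (P : Set Q) :
    upperDensity I (π ⁻¹' P) ≤ Nat.card P / Nat.card Q := by
  classical
  have := Fintype.ofFinite Q
  calc upperDensity I (π ⁻¹' P) = upperDensity I (⋃ q ∈ P.toFinset, π ⁻¹' {q}) := by
        congr 1
        ext
        simp
    _ ≤ ∑ q ∈ P.toFinset, upperDensity I (π ⁻¹' {q}) := upperDensity_biUnion_le hI.1 _ _
    _ ≤ ∑ _q ∈ P.toFinset, 1 / (Nat.card Q : ℝ) :=
        Finset.sum_le_sum fun q _ => hI.upperDensity_preimage_singleton_le π hπ q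
    _ = Nat.card P / Nat.card Q := by
        rw [Finset.sum_const, Nat.card_eq_card_toFinset, nsmul_eq_mul, mul_one_div]

end Folner

def partialTranslate (A : Finset ℕ) (x : ℕ → O) (R : ℕ → Set O) (i : ℕ) : Set O :=
  if i ∈ A then (x i + ·) '' R i else R i

theorem unionGe_subset_of_forall_exists_notMem_image_add {R : ℕ → Set O} {M L : ℕ}
    (hML : M ≤ L) {X : Finset (ℕ → O)} (hX : ∀ y, ∃ x ∈ X, ∀ j < M, y ∉ (x j + ·) '' R j) :
    unionGe R L ⊆ (⋃ x ∈ X, unionGe (partialTranslate (Finset.range M) x R) L \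
      unionLt (partialTranslate (Finset.range M) x R) L) ∪ ⋃ j ∈ Finset.Ico M L, R j := by
  intro y hy
  simp only [unionGe, unionLt, partialTranslate, Set.mem_iUnion, Set.mem_union, Set.mem_sdiff,
    Finset.mem_Ico, Finset.mem_range, exists_prop] at hy ⊢
  by_cases hmid : ∃ j, (M ≤ j ∧ j < L) ∧ y ∈ R j
  · exact Or.inr hmid
  obtain ⟨i, hLi, hyi⟩ := hy
  obtain ⟨x, hxX, hx⟩ := hX y
  refine Or.inl ⟨x, hxX, ⟨i, hLi, by rwa [if_neg (by omega)]⟩, ?_⟩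
  rintro ⟨j, hjL, hyj⟩
  split_ifs at hyj with hjM
  · exact hx j hjM hyj
  · exact hmid ⟨j, ⟨by omega, hjL⟩, hyj⟩

theorem exists_forall_sum_Ico_lt {f : ℕ → ℝ} (hf : Summable f) {ε : ℝ} (hε : 0 < ε) :
    ∃ M, ∀ L, ∑ j ∈ Finset.Ico M L, f j < ε := by
  obtain ⟨s, hs⟩ := hf.vanishing (Iio_mem_nhds hε)
  refine ⟨s.sup id + 1, fun L => hs _ (Finset.disjoint_left.2 fun j hj hjs => ?_)⟩
  have := Finset.le_sup (f := id) hjs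
  simp only [Finset.mem_Ico, id] at hj this
  omega

section Sieve

variable {I : ℕ → Set O}

theorem Sieve.mem_RSet_of_mk_eq (S : Sieve O) {i : ℕ} {r y : O} (hr : r ∈ S.RSet i)
    (h : Ideal.Quotient.mk (S.b i) r = Ideal.Quotient.mk (S.b i) y) : y ∈ S.RSet i := by
  obtain ⟨g, hg, v, hv, rfl⟩ := hr
  have hgv : g + v - y ∈ S.b i := Ideal.Quotient.eq.1 h
  have hyg : y - g ∈ S.b i := by
    convert (S.b i).sub_mem hv hgv using 1
    abel
  exact ⟨g, hg, y - g, hyg, add_sub_cancel g y⟩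

theorem Sieve.RSet_eq_preimage (S : Sieve O) (i : ℕ) :
    S.RSet i = Ideal.Quotient.mk (S.b i) ⁻¹' (Ideal.Quotient.mk (S.b i) '' S.RSet i) :=
  Set.Subset.antisymm (Set.subset_preimage_image _ _)
    fun _ ⟨_, hr, h⟩ => S.mem_RSet_of_mk_eq hr h

theorem Sieve.upperDensity_RSet_le (S : Sieve O) (hI : IsFolner I) (i : ℕ) :
    upperDensity I (S.RSet i) ≤ S.cardR i / S.normb i := by
  have := S.finQuot i
  rw [S.RSet_eq_preimage i]
  exact hI.upperDensity_preimage_le (Ideal.Quotient.mk (S.b i)).toAddMonoidHom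
    Ideal.Quotient.mk_surjective _

theorem Sieve.exists_finset_forall_notMem_image_add (S : Sieve O) (M : ℕ) :
    ∃ X : Finset (ℕ → O), ∀ y, ∃ x ∈ X, ∀ j < M, y ∉ (x j + ·) '' S.RSet j := by
  classical
  have := fun j : Fin M => S.finQuot j
  have := Fintype.ofFinite (∀ j : Fin M, O ⧸ S.b j)
  let rep (c : ∀ j : Fin M, O ⧸ S.b j) (j : ℕ) : O := if h : j < M then (c ⟨j, h⟩).out else 0
  refine ⟨Finset.univ.image rep, fun y => ?_⟩
  choose w hw using fun j => (Set.ne_univ_iff_exists_notMem _).1 (S.ne_univ j)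
  let c : ∀ j : Fin M, O ⧸ S.b j := fun j => Ideal.Quotient.mk _ (y - w j)
  refine ⟨rep c, Finset.mem_image_of_mem _ (Finset.mem_univ _), fun j hj ⟨r, hr, hry⟩ => ?_⟩
  have hrep : Ideal.Quotient.mk (S.b j) (rep c j) = Ideal.Quotient.mk (S.b j) (y - w j) := by
    simp [rep, c, hj, Ideal.Quotient.mk_out]
  refine hw j (S.mem_RSet_of_mk_eq hr ?_)
  rw [eq_sub_of_add_eq' hry, map_sub, hrep, map_sub, sub_sub_cancel]

theorem Sieve.eventually_upperDensity_unionGe_lt (S : Sieve O) (hI : IsFolner I)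
    (hS : S.IsErdos)
    (htrans : ∀ (A : Finset ℕ) (x : ℕ → O), WeakLightTailsFam I (partialTranslate A x S.RSet))
    {δ : ℝ} (hδ : 0 < δ) : ∀ᶠ L in atTop, upperDensity I (unionGe S.RSet L) < δ := by
  obtain ⟨M, hM⟩ := exists_forall_sum_Ico_lt hS (half_pos hδ)
  obtain ⟨X, hX⟩ := S.exists_finset_forall_notMem_image_add M
  set ε := δ / 2 / (X.card + 1)
  have hε : 0 < ε := by positivity
  have hXε : X.card * ε ≤ δ / 2 := by
    rw [mul_div_assoc', div_le_iff₀ (by positivity)]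
    nlinarith
  filter_upwards [eventually_ge_atTop M, (eventually_all_finset X).2 fun x _ =>
    (htrans (Finset.range M) x).eventually_lt_const hε] with L hML hL
  calc upperDensity I (unionGe S.RSet L)
      ≤ ∑ x ∈ X, upperDensity I (unionGe (partialTranslate (Finset.range M) x S.RSet) L \
          unionLt (partialTranslate (Finset.range M) x S.RSet) L) +
        ∑ j ∈ Finset.Ico M L, upperDensity I (S.RSet j) :=
        (upperDensity_mono hI.1 (unionGe_subset_of_forall_exists_notMem_image_add hML hX)).trans
          ((upperDensity_union_le hI.1 _ _).trans
            (add_le_add (upperDensity_biUnion_le hI.1 _ _) (upperDensity_biUnion_le hI.1 _ _)))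
    _ ≤ X.card * ε + ∑ j ∈ Finset.Ico M L, (S.cardR j : ℝ) / S.normb j := by
        refine add_le_add ?_ (Finset.sum_le_sum fun j _ => S.upperDensity_RSet_le hI j)
        simpa using Finset.sum_le_card_nsmul X _ ε fun x hx => (hL x hx).le
    _ < δ / 2 + δ / 2 := add_lt_add_of_le_of_lt hXε (hM L)
    _ = δ := add_halves δ

theorem Sieve.strongLightTailsFam_of_forall_partialTranslate (S : Sieve O) (hI : IsFolner I)
    (hS : S.IsErdos)
    (htrans : ∀ (A : Finset ℕ) (x : ℕ → O), WeakLightTailsFam I (partialTranslate A x S.RSet)) :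
    StrongLightTailsFam I S.RSet :=
  tendsto_order.2
    ⟨fun _ ha => Eventually.of_forall fun _ => ha.trans_le (upperDensity_nonneg hI.1 _),
      fun _ ha => S.eventually_upperDensity_unionGe_lt hI hS htrans ha⟩

end Sieve

theorem strong_light_tails_of_translation_stability_general
    {m : ℕ} (K : Fin m → Type) [∀ j, Field (K j)]
    [∀ j, NumberField (K j)]
    (S : Sieve (OK K)) (I : ℕ → Set (OK K)) (hI : IsFolner I)
    (hWLT : S.HasWeakLightTails I)
    (htrans : ∀ A : Finset ℕ, ∀ x : ℕ → OK K,
      (Summable fun i => ((Nat.card ↥((Ideal.Quotient.mk (S.b i)) ''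
            (if i ∈ A then (x i + ·) '' S.RSet i else S.RSet i)) : ℝ)) / (S.normb i : ℝ))
      ∧ WeakLightTailsFam I
          (fun i => if i ∈ A then (x i + ·) '' S.RSet i else S.RSet i)) :
    S.HasStrongLightTails I :=
  ⟨hWLT.1, S.strongLightTailsFam_of_forall_partialTranslate hI hWLT.1 fun A x => (htrans A x).2⟩

/-- **Strong light tails from translation-stable weak light tails.** If `R` is an Erdős
sieve with weak light tails for `I`, and every sieve obtained from `R` by translating
finitely many of the sets `R_i` still has weak light tails for `I`, then `R` has strong
light tails for `I`. -/
theorem strong_light_tails_of_translation_stability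
    {m : ℕ} (hm : 0 < m) (K : Fin m → Type) [∀ j, Field (K j)]
    [∀ j, NumberField (K j)]
    (S : Sieve (OK K)) (I : ℕ → Set (OK K)) (hI : IsFolner I)
    (hWLT : S.HasWeakLightTails I)
    (htrans : ∀ A : Finset ℕ, ∀ x : ℕ → OK K,
      (Summable fun i => ((Nat.card ↥((Ideal.Quotient.mk (S.b i)) ''
            (if i ∈ A then (x i + ·) '' S.RSet i else S.RSet i)) : ℝ)) / (S.normb i : ℝ))
      ∧ WeakLightTailsFam I
          (fun i => if i ∈ A then (x i + ·) '' S.RSet i else S.RSet i)) :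
    S.HasStrongLightTails I :=
  strong_light_tails_of_translation_stability_general K S I hI hWLT htrans

end ErdosSieve
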